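/- In any three-potent commutative integral residuated lattice, (x ∨ y)² = x² ∨ y². -/

import Mathlib

/-- A commutative integral residuated lattice (CIRL): a lattice with maximum
element `1`, a commutative monoid structure with unit `1`, and a residuated
pair `(*, ⇨)`: `a * b ≤ c ↔ b ≤ a ⇨ c`. -/
class CIRL (α : Type*) extends Lattice α, CommMonoid α, HImp α where
  le_top : ∀ a : α, a ≤ 1
  resid : ∀ a b c : α, a * b ≤ c ↔ b ≤ a ⇨ c

/-!
Expanding, `(x ⊔ y)³` is a join of products of three factors from `{x, y}`; each contains
`x` twice or `y` twice, so integrality bounds it by `x² ⊔ y²`. Three-potency then gives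
`(x ⊔ y)² ≤ (x ⊔ y)³ ≤ x² ⊔ y²`, and the reverse inequality is monotonicity of `*`.
-/

namespace CIRL

variable {α : Type*} [CIRL α]

theorem le_himp_mul (a b : α) : b ≤ a ⇨ a * b :=
  (resid a b _).1 le_rfl

instance toIsOrderedMonoid : IsOrderedMonoid α where
  mul_le_mul_left a b hab c := by
    rw [mul_comm a, mul_comm b, resid]
    exact hab.trans (le_himp_mul c b)

theorem mul_le_left (a b : α) : a * b ≤ a :=
  mul_le_of_le_one_right' (le_top b)

theorem mul_le_right (a b : α) : a * b ≤ b :=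
  mul_le_of_le_one_left' (le_top a)

protected theorem mul_sup (a b c : α) : a * (b ⊔ c) = a * b ⊔ a * c := by
  refine le_antisymm ?_ (sup_le (mul_le_mul_right le_sup_left a) (mul_le_mul_right le_sup_right a))
  rw [resid]
  exact sup_le ((resid a b _).1 le_sup_left) ((resid a c _).1 le_sup_right)

protected theorem sup_mul (a b c : α) : (a ⊔ b) * c = a * c ⊔ b * c := by
  rw [mul_comm, CIRL.mul_sup, mul_comm c, mul_comm c]

theorem sup_mul_self (x y : α) : (x ⊔ y) * (x ⊔ y) = x * x ⊔ x * y ⊔ y * y := by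
  rw [CIRL.sup_mul, CIRL.mul_sup, CIRL.mul_sup, mul_comm y x, sup_assoc, sup_assoc,
    ← sup_assoc (x * y), sup_idem]

theorem sup_mul_mul_le (x y : α) : (x ⊔ y) * (x * y) ≤ x * x ⊔ y * y := by
  rw [CIRL.sup_mul, ← mul_assoc, mul_left_comm y]
  exact sup_le_sup (mul_le_left _ _) (mul_le_right _ _)

theorem sup_mul_self_mul_le (x y : α) :
    (x ⊔ y) * (x ⊔ y) * (x ⊔ y) ≤ x * x ⊔ y * y := by
  rw [sup_mul_self, CIRL.sup_mul, CIRL.sup_mul]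
  refine sup_le (sup_le ?_ ?_) ?_
  · exact (mul_le_left _ _).trans le_sup_left
  · exact mul_comm (x * y) _ ▸ sup_mul_mul_le x y
  · exact (mul_le_left _ _).trans le_sup_right

end CIRL

theorem stmt3 {α : Type*} [CIRL α] (h3 : ∀ a : α, a * a ≤ a * a * a) (x y : α) :
    (x ⊔ y) * (x ⊔ y) = x * x ⊔ y * y :=
  le_antisymm ((h3 _).trans (CIRL.sup_mul_self_mul_le x y))
    (sup_le (mul_le_mul' le_sup_left le_sup_left) (mul_le_mul' le_sup_right le_sup_right))
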